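/- arXiv:1406.0716 — 5 statements merged into one kernel-verified Lean document; each statement's English description precedes it below -/
import Mathlib

section
/- Let b₁ = (0,0), b₂ = (1,0), z = (1/2, √3/2), and let T₂ be the equilateral triangle with vertices b₁, b₂, z. For every point p in T₂, the point z is the closest point to p on the boundary of D(b₁,1) ∪ D(b₂,1); that is, dist(p, ∂(D(b₁,1) ∪ D(b₂,1))) = dist(p, z). -/
open Metric Real

noncomputable def pt (x y : ℝ) : EuclideanSpace ℝ (Fin 2) := WithLp.toLp 2 ![x, y]

lemma dist2 (a b : EuclideanSpace ℝ (Fin 2)) :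
    dist a b = Real.sqrt ((a 0 - b 0)^2 + (a 1 - b 1)^2) := by
  rw [EuclideanSpace.dist_eq, Fin.sum_univ_two]
  simp [Real.dist_eq, sq_abs]

lemma key (s px py qx qy : ℝ) (hs : s^2 = 3) (hs0 : 0 < s)
    (hpy : 0 ≤ py) (hpx : py ≤ s*px)
    (hq : qx^2 + qy^2 = 1) (hqx : qx ≤ 1/2) :
    (px - 1/2)^2 + (py - s/2)^2 ≤ (px - qx)^2 + (py - qy)^2 := by
  have hqb : qx + s*qy ≤ 2 := by
    nlinarith [sq_nonneg (s*qx - qy), sq_nonneg (qx + s*qy - 2), sq_nonneg (qx + s*qy + 2)]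
  have hpx0 : 0 ≤ px := by nlinarith
  rcases le_or_gt qy (s/2) with h | h
  · nlinarith [mul_nonneg hpx0 (sub_nonneg.2 hqx), mul_nonneg hpy (sub_nonneg.2 h)]
  · nlinarith [mul_nonneg hpx0 (sub_nonneg.2 hqb),
      mul_nonneg (sub_nonneg.2 hpx) (sub_nonneg.2 h.le)]

set_option maxHeartbeats 2000000 in
/-- Let b₁ = (0,0), b₂ = (1,0), z = (1/2, √3/2) and T₂ the equilateral triangle
b₁ b₂ z. For every point p ∈ T₂, z is the closest point on the boundary of
D(b₁,1) ∪ D(b₂,1): dist(p, ∂(D(b₁,1) ∪ D(b₂,1))) = dist(p, z). -/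
theorem closest_boundary_point (b₁ b₂ z : EuclideanSpace ℝ (Fin 2))
    (hb₁ : b₁ = pt 0 0) (hb₂ : b₂ = pt 1 0)
    (hz : z = pt (1/2) (Real.sqrt 3 / 2))
    (p : EuclideanSpace ℝ (Fin 2))
    (hp : p ∈ convexHull ℝ ({b₁, b₂, z} : Set (EuclideanSpace ℝ (Fin 2)))) :
    Metric.infDist p (frontier (Metric.closedBall b₁ 1 ∪ Metric.closedBall b₂ 1)) =
      dist p z := by
  have hs3 : Real.sqrt 3 ^ 2 = 3 := Real.sq_sqrt (by norm_num)
  have hs0 : 0 < Real.sqrt 3 := Real.sqrt_pos.2 (by norm_num)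
  set s := Real.sqrt 3 with hsdef
  -- coordinates of the named points
  have hb₁0 : b₁ 0 = 0 := by simp [hb₁, pt]
  have hb₁1 : b₁ 1 = 0 := by simp [hb₁, pt]
  have hb₂0 : b₂ 0 = 1 := by simp [hb₂, pt]
  have hb₂1 : b₂ 1 = 0 := by simp [hb₂, pt]
  have hz0 : z 0 = 1/2 := by simp [hz, pt]
  have hz1 : z 1 = s/2 := by simp [hz, pt]
  -- distances from z to the centers
  have hdzb₁ : dist z b₁ = 1 := by
    rw [dist2, hz0, hz1, hb₁0, hb₁1]
    rw [show (1/2 - 0 : ℝ)^2 + (s/2 - 0)^2 = 1 by nlinarith]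
    exact Real.sqrt_one
  have hdzb₂ : dist z b₂ = 1 := by
    rw [dist2, hz0, hz1, hb₂0, hb₂1]
    rw [show (1/2 - 1 : ℝ)^2 + (s/2 - 0)^2 = 1 by nlinarith]
    exact Real.sqrt_one
  set S := Metric.closedBall b₁ 1 ∪ Metric.closedBall b₂ 1 with hS
  -- z is on the frontier of S
  have hzS : z ∈ frontier S := by
    rw [frontier_eq_closure_inter_closure]
    constructor
    · exact subset_closure (Or.inl (by simp [Metric.mem_closedBall, hdzb₁]))
    · rw [Metric.mem_closure_iff]
      intro ε hε
      set δ := min ε 1 / 2 with hδ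
      have hδ0 : 0 < δ := by positivity
      have hδε : δ < ε := by
        have : min ε 1 ≤ ε := min_le_left _ _
        simp only [hδ]; linarith
      refine ⟨pt (1/2) (s/2 + δ), ?_, ?_⟩
      · simp only [Set.mem_compl_iff, hS, Set.mem_union, Metric.mem_closedBall, not_or, not_le]
        constructor
        · rw [dist2, hb₁0, hb₁1]
          simp only [pt, WithLp.ofLp_toLp, Matrix.cons_val_zero, Matrix.cons_val_one, Matrix.head_cons]
          refine (Real.lt_sqrt (by norm_num)).2 ?_
          nlinarith
        · rw [dist2, hb₂0, hb₂1]
          simp only [pt, WithLp.ofLp_toLp, Matrix.cons_val_zero, Matrix.cons_val_one, Matrix.head_cons]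
          refine (Real.lt_sqrt (by norm_num)).2 ?_
          nlinarith
      · rw [dist2, hz0, hz1]
        simp only [pt, WithLp.ofLp_toLp, Matrix.cons_val_zero, Matrix.cons_val_one, Matrix.head_cons]
        rw [show (1/2 - 1/2 : ℝ)^2 + (s/2 - (s/2 + δ))^2 = δ^2 by ring]
        rw [Real.sqrt_sq hδ0.le]
        exact hδε
  -- the coordinates of p satisfy the triangle inequalities
  have hlin1 : IsLinearMap ℝ (fun x : EuclideanSpace ℝ (Fin 2) => x 1) := by
    constructor <;> intros <;> rfl
  have hlin2 : IsLinearMap ℝ (fun x : EuclideanSpace ℝ (Fin 2) => s * x 0 - x 1) := by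
    constructor <;> intros <;> simp [PiLp.add_apply, PiLp.smul_apply, smul_eq_mul] <;> ring
  have hlin3 : IsLinearMap ℝ (fun x : EuclideanSpace ℝ (Fin 2) => s * x 0 + x 1) := by
    constructor <;> intros <;> simp [PiLp.add_apply, PiLp.smul_apply, smul_eq_mul] <;> ring
  have hpy : 0 ≤ p 1 := by
    refine convexHull_min ?_ (convex_halfSpace_ge hlin1 0) hp
    intro x hx
    simp only [Set.mem_insert_iff, Set.mem_singleton_iff] at hx
    rcases hx with rfl | rfl | rfl <;> simp only [Set.mem_setOf_eq, hb₁1, hb₂1, hz1] <;> positivity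
  have hpx : p 1 ≤ s * p 0 := by
    have : p ∈ {x : EuclideanSpace ℝ (Fin 2) | 0 ≤ s * x 0 - x 1} := by
      refine convexHull_min ?_ (convex_halfSpace_ge hlin2 0) hp
      intro x hx
      simp only [Set.mem_insert_iff, Set.mem_singleton_iff] at hx
      rcases hx with rfl | rfl | rfl <;>
        simp only [Set.mem_setOf_eq, hb₁0, hb₁1, hb₂0, hb₂1, hz0, hz1] <;> nlinarith
    simpa using this
  have hpx' : p 1 ≤ s * (1 - p 0) := by
    have : p ∈ {x : EuclideanSpace ℝ (Fin 2) | s * x 0 + x 1 ≤ s} := by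
      refine convexHull_min ?_ (convex_halfSpace_le hlin3 s) hp
      intro x hx
      simp only [Set.mem_insert_iff, Set.mem_singleton_iff] at hx
      rcases hx with rfl | rfl | rfl <;>
        simp only [Set.mem_setOf_eq, hb₁0, hb₁1, hb₂0, hb₂1, hz0, hz1] <;> nlinarith
    simp only [Set.mem_setOf_eq] at this
    nlinarith
  -- lower bound: every frontier point is at least as far as z
  have hlow : ∀ q ∈ frontier S, dist p z ≤ dist p q := by
    intro q hq
    have hsub := frontier_union_subset (Metric.closedBall b₁ 1) (Metric.closedBall b₂ 1)
    have hq' := hsub hq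
    rw [frontier_closedBall b₁ (one_ne_zero), frontier_closedBall b₂ (one_ne_zero),
      closure_compl, closure_compl, interior_closedBall b₁ (one_ne_zero),
      interior_closedBall b₂ (one_ne_zero)] at hq'
    have goalform : ∀ qx qy : ℝ, q 0 = qx → q 1 = qy → qx^2 + qy^2 = 1 → qx ≤ 1/2 →
        dist p z ≤ dist p q := by
      intro qx qy h0 h1 hqq hqx
      rw [dist2, dist2, hz0, hz1, h0, h1]
      apply Real.sqrt_le_sqrt
      exact key s (p 0) (p 1) qx qy hs3 hs0 hpy hpx hqq hqx
    rcases hq' with ⟨hq1, hq2⟩ | ⟨hq2, hq1⟩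
    · -- q on sphere b₁, outside ball b₂
      rw [Metric.mem_sphere, dist2, hb₁0, hb₁1] at hq1
      have hq1' : (q 0 - 0)^2 + (q 1 - 0)^2 = 1 := by
        have := Real.sq_sqrt (show (0:ℝ) ≤ (q 0 - 0)^2 + (q 1 - 0)^2 by positivity)
        rw [hq1] at this; linarith
      simp only [Set.mem_compl_iff, Metric.mem_ball, not_lt] at hq2
      rw [dist2, hb₂0, hb₂1] at hq2
      have hq2' : 1 ≤ (q 0 - 1)^2 + (q 1 - 0)^2 := by
        have h' := Real.sq_sqrt (show (0:ℝ) ≤ (q 0 - 1)^2 + (q 1 - 0)^2 by positivity)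
        nlinarith
      refine goalform (q 0) (q 1) rfl rfl (by nlinarith) (by nlinarith)
    · -- q on sphere b₂, outside ball b₁ : reflect
      rw [Metric.mem_sphere, dist2, hb₂0, hb₂1] at hq1
      have hq1' : (q 0 - 1)^2 + (q 1 - 0)^2 = 1 := by
        have := Real.sq_sqrt (show (0:ℝ) ≤ (q 0 - 1)^2 + (q 1 - 0)^2 by positivity)
        rw [hq1] at this; linarith
      simp only [Set.mem_compl_iff, Metric.mem_ball, not_lt] at hq2
      rw [dist2, hb₁0, hb₁1] at hq2
      have hq2' : 1 ≤ (q 0 - 0)^2 + (q 1 - 0)^2 := by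
        have h' := Real.sq_sqrt (show (0:ℝ) ≤ (q 0 - 0)^2 + (q 1 - 0)^2 by positivity)
        nlinarith
      -- use key with reflected coordinates
      rw [dist2, dist2, hz0, hz1]
      apply Real.sqrt_le_sqrt
      have := key s (1 - p 0) (p 1) (1 - q 0) (q 1) hs3 hs0 hpy (by linarith) (by nlinarith)
        (by nlinarith)
      nlinarith [this]
  refine le_antisymm (Metric.infDist_le_dist_of_mem hzS) ?_
  by_contra hcon
  push_neg at hcon
  obtain ⟨y, hy, hylt⟩ := (Metric.infDist_lt_iff ⟨z, hzS⟩).1 hcon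
  exact absurd (hlow y hy) (not_le.2 hylt)
end

section
/- In the k-nearest-neighbour mutual graph G on a point set in the plane: if x and y are points of G with D^k(x) ⊆ D^k(y), then xy is an edge of G and Γ⁺(x) ∪ {x} = Γ⁺(y) ∪ {y}; consequently, if xy is an edge of G then x is joined in G to every point of G lying in the disk of radius ‖xy‖/2 centered at x. -/
open Metric Real

/-- In the mutual k-nearest-neighbour graph on a finite set V of points in the
plane with distinct pairwise distances, where N v is the set of k nearest
neighbours of v and D^k(v) = closedBall v (r v) is the smallest disk centred at v
containing N v: if D^k(x) ⊆ D^k(y), then xy is an edge and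
N x ∪ {x} = N y ∪ {y}; consequently if xy is an edge then x is joined to every
point of V in the disk of radius ‖xy‖/2 centred at x. -/
theorem knn_disk_subset (V : Finset (EuclideanSpace ℝ (Fin 2))) (k : ℕ) (hk : 1 ≤ k)
    (N : EuclideanSpace ℝ (Fin 2) → Finset (EuclideanSpace ℝ (Fin 2)))
    (r : EuclideanSpace ℝ (Fin 2) → ℝ)
    (hdd : ∀ p ∈ V, ∀ q ∈ V, ∀ p' ∈ V, ∀ q' ∈ V, p ≠ q → p' ≠ q' →
      dist p q = dist p' q' → ({p, q} : Set (EuclideanSpace ℝ (Fin 2))) = {p', q'})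
    (hNsub : ∀ v ∈ V, N v ⊆ V)
    (hNself : ∀ v ∈ V, v ∉ N v)
    (hNcard : ∀ v ∈ V, (N v).card = k)
    (hNnear : ∀ v ∈ V, ∀ u ∈ N v, ∀ w ∈ V, w ∉ N v → w ≠ v → dist v u < dist v w)
    (hball : ∀ v ∈ V, ∀ w ∈ V, w ∈ Metric.closedBall v (r v) ↔ (w ∈ N v ∨ w = v))
    (hrmem : ∀ v ∈ V, ∃ u ∈ N v, dist v u = r v)
    (x y : EuclideanSpace ℝ (Fin 2)) (hx : x ∈ V) (hy : y ∈ V) (hxy : x ≠ y) :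
    (Metric.closedBall x (r x) ⊆ Metric.closedBall y (r y) →
      (y ∈ N x ∧ x ∈ N y) ∧
      ((N x : Set (EuclideanSpace ℝ (Fin 2))) ∪ {x} = (N y : Set _) ∪ {y})) ∧
    ((y ∈ N x ∧ x ∈ N y) →
      ∀ z ∈ V, z ≠ x → z ∈ Metric.closedBall x (dist x y / 2) →
        (z ∈ N x ∧ x ∈ N z)) := by
  classical
  constructor
  · intro hsub
    have hsubF : insert x (N x) ⊆ insert y (N y) := by
      intro w hw
      have hwV : w ∈ V := by
        rcases Finset.mem_insert.mp hw with h | h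
        · exact h ▸ hx
        · exact hNsub x hx h
      have hwball : w ∈ Metric.closedBall x (r x) := by
        rw [hball x hx w hwV]
        rcases Finset.mem_insert.mp hw with h | h
        · exact Or.inr h
        · exact Or.inl h
      rcases (hball y hy w hwV).mp (hsub hwball) with h | h
      · exact Finset.mem_insert_of_mem h
      · exact h ▸ Finset.mem_insert_self y (N y)
    have hcardx : (insert x (N x)).card = k + 1 := by
      rw [Finset.card_insert_of_notMem (hNself x hx), hNcard x hx]
    have hcardy : (insert y (N y)).card = k + 1 := by
      rw [Finset.card_insert_of_notMem (hNself y hy), hNcard y hy]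
    have heq : insert x (N x) = insert y (N y) :=
      Finset.eq_of_subset_of_card_le hsubF (by omega)
    have hyNx : y ∈ N x := by
      have hmem : y ∈ insert x (N x) := heq ▸ Finset.mem_insert_self y (N y)
      rcases Finset.mem_insert.mp hmem with h | h
      · exact absurd h.symm hxy
      · exact h
    have hxNy : x ∈ N y := by
      have hmem : x ∈ insert y (N y) := heq ▸ Finset.mem_insert_self x (N x)
      rcases Finset.mem_insert.mp hmem with h | h
      · exact absurd h hxy
      · exact h
    refine ⟨⟨hyNx, hxNy⟩, ?_⟩
    have hcoe : ((insert x (N x) : Finset _) : Set (EuclideanSpace ℝ (Fin 2))) = ((insert y (N y) : Finset _) : Set (EuclideanSpace ℝ (Fin 2))) := by rw [heq]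
    simpa [Finset.coe_insert, Set.union_singleton] using hcoe
  · rintro ⟨hyNx, hxNy⟩ z hz hzx hzball
    have hdxy : 0 < dist x y := dist_pos.mpr hxy
    have hzle : dist x z ≤ dist x y / 2 := by
      simpa [Metric.mem_closedBall, dist_comm] using hzball
    have hclose : ∀ w ∈ V, w ≠ x → dist x w < dist x y → w ∈ N x := by
      intro w hw hwx hdist
      by_contra h
      exact absurd (hNnear x hx y hyNx w hw h hwx) (not_lt.mpr hdist.le)
    have hzNx : z ∈ N x := hclose z hz hzx (by linarith)
    refine ⟨hzNx, ?_⟩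
    by_contra hxNz
    have hsubF : insert z (N z) ⊆ N x := by
      intro u hu
      rcases Finset.mem_insert.mp hu with h | h
      · exact h ▸ hzNx
      · have huV : u ∈ V := hNsub z hz h
        have hux : u ≠ x := fun he => hxNz (he ▸ h)
        have hzu : dist z u < dist z x := hNnear z hz u h x hx hxNz (Ne.symm hzx)
        have hlt : dist x u < dist x y := by
          have ht := dist_triangle x z u
          have hcc : dist z x = dist x z := dist_comm z x
          linarith
        exact hclose u huV hux hlt
    have hcards : k + 1 ≤ k := by
      have h1 : (insert z (N z)).card = k + 1 := by
        rw [Finset.card_insert_of_notMem (hNself z hz), hNcard z hz]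
      calc k + 1 = (insert z (N z)).card := h1.symm
        _ ≤ (N x).card := Finset.card_le_card hsubF
        _ = k := hNcard x hx
    omega
end

section
/- In the k-nearest-neighbour mutual graph G: suppose w, x, y, z are four points such that D^k(w) ∪ D^k(x) ⊆ D^k(y) ∪ D^k(z) and D^k(w) ∩ D^k(x) ⊆ D^k(y) ∩ D^k(z). Then at least one of wy, wz, xy, xz is an edge of G. -/
open Metric Real

/-- In the mutual k-nearest-neighbour graph on a finite set V of points in the
plane with distinct pairwise distances: if w, x, y, z are four (distinct) points
with D^k(w) ∪ D^k(x) ⊆ D^k(y) ∪ D^k(z) and D^k(w) ∩ D^k(x) ⊆ D^k(y) ∩ D^k(z),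
then at least one of wy, wz, xy, xz is an edge. -/
theorem knn_union_inter (V : Finset (EuclideanSpace ℝ (Fin 2))) (k : ℕ) (hk : 1 ≤ k)
    (N : EuclideanSpace ℝ (Fin 2) → Finset (EuclideanSpace ℝ (Fin 2)))
    (r : EuclideanSpace ℝ (Fin 2) → ℝ)
    (hdd : ∀ p ∈ V, ∀ q ∈ V, ∀ p' ∈ V, ∀ q' ∈ V, p ≠ q → p' ≠ q' →
      dist p q = dist p' q' → ({p, q} : Set (EuclideanSpace ℝ (Fin 2))) = {p', q'})
    (hNsub : ∀ v ∈ V, N v ⊆ V)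
    (hNself : ∀ v ∈ V, v ∉ N v)
    (hNcard : ∀ v ∈ V, (N v).card = k)
    (hNnear : ∀ v ∈ V, ∀ u ∈ N v, ∀ w' ∈ V, w' ∉ N v → w' ≠ v → dist v u < dist v w')
    (hball : ∀ v ∈ V, ∀ w' ∈ V, w' ∈ Metric.closedBall v (r v) ↔ (w' ∈ N v ∨ w' = v))
    (hrmem : ∀ v ∈ V, ∃ u ∈ N v, dist v u = r v)
    (w x y z : EuclideanSpace ℝ (Fin 2))
    (hw : w ∈ V) (hx : x ∈ V) (hy : y ∈ V) (hz : z ∈ V)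
    (hwx : w ≠ x) (hwy : w ≠ y) (hwz : w ≠ z) (hxy : x ≠ y) (hxz : x ≠ z) (hyz : y ≠ z)
    (hunion : Metric.closedBall w (r w) ∪ Metric.closedBall x (r x) ⊆
      Metric.closedBall y (r y) ∪ Metric.closedBall z (r z))
    (hinter : Metric.closedBall w (r w) ∩ Metric.closedBall x (r x) ⊆
      Metric.closedBall y (r y) ∩ Metric.closedBall z (r z)) :
    (y ∈ N w ∧ w ∈ N y) ∨ (z ∈ N w ∧ w ∈ N z) ∨
    (y ∈ N x ∧ x ∈ N y) ∨ (z ∈ N x ∧ x ∈ N z) := by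
  classical
  have hr0 : ∀ v ∈ V, 0 ≤ r v := by
    intro v hv
    obtain ⟨u, _, hdu⟩ := hrmem v hv
    exact hdu ▸ dist_nonneg
  have hmem : ∀ a ∈ V, ∀ b ∈ V, a ≠ b → (a ∈ N b ↔ dist a b ≤ r b) := by
    intro a ha b hb hab
    rw [← Metric.mem_closedBall, hball b hb a ha]
    simp [hab]
  set F : EuclideanSpace ℝ (Fin 2) → Finset (EuclideanSpace ℝ (Fin 2)) :=
    fun v => V.filter (fun p => dist p v ≤ r v) with hF
  have hFeq : ∀ v ∈ V, F v = insert v (N v) := by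
    intro v hv
    ext p
    simp only [hF, Finset.mem_filter, Finset.mem_insert]
    constructor
    · rintro ⟨hp, hd⟩
      have := (hball v hv p hp).mp (Metric.mem_closedBall.mpr hd)
      tauto
    · rintro (h | hp)
      · rw [h]
        exact ⟨hv, by simpa using hr0 v hv⟩
      · exact ⟨hNsub v hv hp,
          Metric.mem_closedBall.mp ((hball v hv p (hNsub v hv hp)).mpr (Or.inl hp))⟩
  have hFcard : ∀ v ∈ V, (F v).card = k + 1 := by
    intro v hv
    rw [hFeq v hv, Finset.card_insert_of_notMem (hNself v hv), hNcard v hv]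
  have hself : ∀ v ∈ V, v ∈ F v := by
    intro v hv
    simp only [hF, Finset.mem_filter]
    exact ⟨hv, by simpa using hr0 v hv⟩
  have hU : F w ∪ F x ⊆ F y ∪ F z := by
    intro p hp
    simp only [hF, Finset.mem_union, Finset.mem_filter] at hp ⊢
    have hpV : p ∈ V := by tauto
    have hm : p ∈ Metric.closedBall y (r y) ∪ Metric.closedBall z (r z) := by
      apply hunion
      rcases hp with ⟨_, h⟩ | ⟨_, h⟩
      · exact Or.inl (Metric.mem_closedBall.mpr h)
      · exact Or.inr (Metric.mem_closedBall.mpr h)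
    rcases hm with h | h
    · exact Or.inl ⟨hpV, Metric.mem_closedBall.mp h⟩
    · exact Or.inr ⟨hpV, Metric.mem_closedBall.mp h⟩
  have hI : F w ∩ F x ⊆ F y ∩ F z := by
    intro p hp
    simp only [hF, Finset.mem_inter, Finset.mem_filter] at hp ⊢
    obtain ⟨⟨hpV, h1⟩, ⟨_, h2⟩⟩ := hp
    have hm := hinter ⟨Metric.mem_closedBall.mpr h1, Metric.mem_closedBall.mpr h2⟩
    exact ⟨⟨hpV, Metric.mem_closedBall.mp hm.1⟩, ⟨hpV, Metric.mem_closedBall.mp hm.2⟩⟩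
  have hcards : (F w ∪ F x).card + (F w ∩ F x).card = (F y ∪ F z).card + (F y ∩ F z).card := by
    rw [Finset.card_union_add_card_inter, Finset.card_union_add_card_inter,
      hFcard w hw, hFcard x hx, hFcard y hy, hFcard z hz]
  have hUeq : F w ∪ F x = F y ∪ F z := by
    have h1 := Finset.card_le_card hI
    exact Finset.eq_of_subset_of_card_le hU (by omega)
  -- the four membership disjunctions, as distance inequalities
  have Hw : dist w y ≤ r y ∨ dist w z ≤ r z := by
    have : w ∈ F y ∪ F z := hU (Finset.mem_union_left _ (hself w hw))
    simp only [hF, Finset.mem_union, Finset.mem_filter] at this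
    tauto
  have Hx : dist x y ≤ r y ∨ dist x z ≤ r z := by
    have : x ∈ F y ∪ F z := hU (Finset.mem_union_right _ (hself x hx))
    simp only [hF, Finset.mem_union, Finset.mem_filter] at this
    tauto
  have Hy : dist y w ≤ r w ∨ dist y x ≤ r x := by
    have : y ∈ F w ∪ F x := hUeq ▸ Finset.mem_union_left _ (hself y hy)
    simp only [hF, Finset.mem_union, Finset.mem_filter] at this
    tauto
  have Hz : dist z w ≤ r w ∨ dist z x ≤ r x := by
    have : z ∈ F w ∪ F x := hUeq ▸ Finset.mem_union_right _ (hself z hz)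
    simp only [hF, Finset.mem_union, Finset.mem_filter] at this
    tauto
  by_contra hcon
  push_neg at hcon
  obtain ⟨n1, n2, n3, n4⟩ := hcon
  -- translate negations into strict implications
  have s1 : dist w y ≤ r y → r w < dist y w := by
    intro h
    have hwNy : w ∈ N y := (hmem w hw y hy hwy).mpr h
    have : y ∉ N w := fun hyNw => n1 hyNw hwNy
    have := mt (hmem y hy w hw hwy.symm).mpr this
    linarith [not_le.mp this]
  have s2 : dist w z ≤ r z → r w < dist z w := by
    intro h
    have hwNz : w ∈ N z := (hmem w hw z hz hwz).mpr h
    have : z ∉ N w := fun hzNw => n2 hzNw hwNz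
    have := mt (hmem z hz w hw hwz.symm).mpr this
    linarith [not_le.mp this]
  have s3 : dist x y ≤ r y → r x < dist y x := by
    intro h
    have hxNy : x ∈ N y := (hmem x hx y hy hxy).mpr h
    have : y ∉ N x := fun hyNx => n3 hyNx hxNy
    have := mt (hmem y hy x hx hxy.symm).mpr this
    linarith [not_le.mp this]
  have s4 : dist x z ≤ r z → r x < dist z x := by
    intro h
    have hxNz : x ∈ N z := (hmem x hx z hz hxz).mpr h
    have : z ∉ N x := fun hzNx => n4 hzNx hxNz
    have := mt (hmem z hz x hx hxz.symm).mpr this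
    linarith [not_le.mp this]
  have t1 : dist y w ≤ r w → r y < dist w y := by
    intro h
    have hyNw : y ∈ N w := (hmem y hy w hw hwy.symm).mpr h
    have : w ∉ N y := fun hwNy => n1 hyNw hwNy
    have := mt (hmem w hw y hy hwy).mpr this
    linarith [not_le.mp this]
  have t2 : dist z w ≤ r w → r z < dist w z := by
    intro h
    have hzNw : z ∈ N w := (hmem z hz w hw hwz.symm).mpr h
    have : w ∉ N z := fun hwNz => n2 hzNw hwNz
    have := mt (hmem w hw z hz hwz).mpr this
    linarith [not_le.mp this]
  have t3 : dist y x ≤ r x → r y < dist x y := by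
    intro h
    have hyNx : y ∈ N x := (hmem y hy x hx hxy.symm).mpr h
    have : x ∉ N y := fun hxNy => n3 hyNx hxNy
    have := mt (hmem x hx y hy hxy).mpr this
    linarith [not_le.mp this]
  have t4 : dist z x ≤ r x → r z < dist x z := by
    intro h
    have hzNx : z ∈ N x := (hmem z hz x hx hxz.symm).mpr h
    have : x ∉ N z := fun hxNz => n4 hzNx hxNz
    have := mt (hmem x hx z hz hxz).mpr this
    linarith [not_le.mp this]
  have Hw' : (dist w y ≤ r y ∧ r w < dist y w) ∨ (dist w z ≤ r z ∧ r w < dist z w) :=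
    Hw.imp (fun h => ⟨h, s1 h⟩) (fun h => ⟨h, s2 h⟩)
  have Hx' : (dist x y ≤ r y ∧ r x < dist y x) ∨ (dist x z ≤ r z ∧ r x < dist z x) :=
    Hx.imp (fun h => ⟨h, s3 h⟩) (fun h => ⟨h, s4 h⟩)
  have Hy' : (dist y w ≤ r w ∧ r y < dist w y) ∨ (dist y x ≤ r x ∧ r y < dist x y) :=
    Hy.imp (fun h => ⟨h, t1 h⟩) (fun h => ⟨h, t3 h⟩)
  have Hz' : (dist z w ≤ r w ∧ r z < dist w z) ∨ (dist z x ≤ r x ∧ r z < dist x z) :=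
    Hz.imp (fun h => ⟨h, t2 h⟩) (fun h => ⟨h, t4 h⟩)
  rcases Hw' with ⟨h1, h1'⟩ | ⟨h1, h1'⟩ <;> rcases Hx' with ⟨h2, h2'⟩ | ⟨h2, h2'⟩ <;>
    rcases Hy' with ⟨h3, h3'⟩ | ⟨h3, h3'⟩ <;> rcases Hz' with ⟨h4, h4'⟩ | ⟨h4, h4'⟩ <;>
    linarith [dist_comm w y, dist_comm w z, dist_comm x y, dist_comm x z,
      dist_comm y w, dist_comm z w, dist_comm y x, dist_comm z x]
end

section
/- For regions X and Y of the plane with finite positive areas, and points placed by a Poisson process of intensity 1, the probability that X contains at least k points and Y contains no points is at most (|X|/(|X|+|Y|))^k. -/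
open MeasureTheory Real

/-- For disjoint regions X and Y of the plane with finite positive area and points
placed by a Poisson process of intensity 1 (so the counts #X, #Y are independent
Poisson variables with means |X|, |Y|), the probability that X contains at least
k points and Y contains none is at most (|X|/(|X|+|Y|))^k. -/
theorem poisson_full_empty
    {Ω : Type*} [MeasurableSpace Ω] (P : Measure Ω) [IsProbabilityMeasure P]
    (X Y : Set (EuclideanSpace ℝ (Fin 2)))
    (hX : MeasurableSet X) (hY : MeasurableSet Y) (hdisj : Disjoint X Y)
    (hX0 : 0 < (volume X).toReal) (hXfin : volume X < ⊤)
    (hY0 : 0 < (volume Y).toReal) (hYfin : volume Y < ⊤)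
    (NX NY : Ω → ℕ)
    (hjoint : ∀ m n : ℕ,
      P {ω | NX ω = m ∧ NY ω = n} =
        ENNReal.ofReal (Real.exp (-((volume X).toReal + (volume Y).toReal)) *
          ((volume X).toReal ^ m / m.factorial) *
          ((volume Y).toReal ^ n / n.factorial)))
    (k : ℕ) :
    P {ω | k ≤ NX ω ∧ NY ω = 0} ≤
      ENNReal.ofReal (((volume X).toReal / ((volume X).toReal + (volume Y).toReal)) ^ k) := by
  set a := (volume X).toReal with ha_def
  set b := (volume Y).toReal with hb_def
  have ha : 0 < a := hX0
  have hb : 0 < b := hY0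
  have hab : 0 < a + b := by linarith
  set r := (a / (a + b)) ^ k with hr_def
  have hr0 : 0 ≤ r := by positivity
  set C := r * Real.exp (-(a + b)) with hC_def
  have hC0 : 0 ≤ C := by positivity
  have hsub : {ω | k ≤ NX ω ∧ NY ω = 0} ⊆ ⋃ m : ℕ, {ω | NX ω = k + m ∧ NY ω = 0} := by
    rintro ω ⟨h1, h2⟩
    exact Set.mem_iUnion.2 ⟨NX ω - k, ⟨by omega, h2⟩⟩
  have hterm : ∀ m : ℕ, P {ω | NX ω = k + m ∧ NY ω = 0}
      ≤ ENNReal.ofReal C * ENNReal.ofReal ((a + b) ^ (k + m) / (k + m).factorial) := by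
    intro m
    rw [hjoint (k + m) 0, ← ENNReal.ofReal_mul hC0]
    apply ENNReal.ofReal_le_ofReal
    have hkey : a ^ (k + m) ≤ r * (a + b) ^ (k + m) := by
      have h1 : r * (a + b) ^ (k + m) = a ^ k * (a + b) ^ m := by
        rw [hr_def, div_pow, pow_add]
        field_simp
      rw [h1, pow_add]
      gcongr
      linarith
    have h2 : a ^ (k + m) / ((k + m).factorial : ℝ)
        ≤ r * (a + b) ^ (k + m) / (k + m).factorial := by gcongr
    simp only [pow_zero, Nat.factorial_zero, Nat.cast_one, div_one, mul_one]
    calc Real.exp (-(a + b)) * (a ^ (k + m) / ((k + m).factorial : ℝ))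
        ≤ Real.exp (-(a + b)) * (r * (a + b) ^ (k + m) / (k + m).factorial) :=
          mul_le_mul_of_nonneg_left h2 (Real.exp_nonneg _)
      _ = C * ((a + b) ^ (k + m) / (k + m).factorial) := by rw [hC_def]; ring
  calc P {ω | k ≤ NX ω ∧ NY ω = 0}
      ≤ ∑' m : ℕ, P {ω | NX ω = k + m ∧ NY ω = 0} :=
        le_trans (measure_mono hsub) (measure_iUnion_le _)
    _ ≤ ∑' m : ℕ, ENNReal.ofReal C * ENNReal.ofReal ((a + b) ^ (k + m) / (k + m).factorial) :=
        ENNReal.tsum_le_tsum hterm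
    _ = ENNReal.ofReal C * ∑' m : ℕ, ENNReal.ofReal ((a + b) ^ (k + m) / (k + m).factorial) :=
        ENNReal.tsum_mul_left
    _ ≤ ENNReal.ofReal C * ∑' n : ℕ, ENNReal.ofReal ((a + b) ^ n / n.factorial) := by
        exact mul_le_mul_right (ENNReal.tsum_comp_le_tsum_of_injective (add_right_injective k)
          (fun n => ENNReal.ofReal ((a + b) ^ n / n.factorial))) _
    _ = ENNReal.ofReal C * ENNReal.ofReal (Real.exp (a + b)) := by
        congr 1
        rw [← ENNReal.ofReal_tsum_of_nonneg (fun n => by positivity)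
          (Real.summable_pow_div_factorial (a + b))]
        congr 1
        rw [Real.exp_eq_exp_ℝ, NormedSpace.exp_eq_tsum_div]
    _ = ENNReal.ofReal r := by
        rw [← ENNReal.ofReal_mul hC0, hC_def]
        congr 1
        have h0 : -(a + b) + (a + b) = 0 := by ring
        rw [mul_assoc, ← Real.exp_add, h0, Real.exp_zero, mul_one]
end

section
/- Let a = (0,0), b with ‖ab‖ = ρ, ρ > 0. Define B(λ) = (D(b,ρ) \ D(a,ρ)) ∩ D(a,λ) for λ > ρ. Then the area of B(1.0767·ρ) is at most 0.1632·ρ². -/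
set_option maxHeartbeats 1000000

open MeasureTheory Metric Real Pointwise


private lemma aux_nonneg {f f' : ℝ → ℝ} (hd : ∀ x, HasDerivAt f (f' x) x)
    (h0 : f 0 = 0) (hf' : ∀ x, 0 ≤ x → 0 ≤ f' x) {x : ℝ} (hx : 0 ≤ x) : 0 ≤ f x := by
  have hmono : MonotoneOn f (Set.Ici 0) := by
    apply monotoneOn_of_deriv_nonneg (convex_Ici 0)
    · exact Continuous.continuousOn (continuous_iff_continuousAt.2
        (fun y => (hd y).differentiableAt.continuousAt))
    · intro y _
      exact (hd y).differentiableAt.differentiableWithinAt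
    · intro y hy
      rw [interior_Ici] at hy
      rw [(hd y).deriv]
      exact hf' y hy.le
  calc (0:ℝ) = f 0 := h0.symm
    _ ≤ f x := hmono (Set.self_mem_Ici) hx hx

private lemma chain1 {x : ℝ} (hx : 0 ≤ x) : 0 ≤ x - Real.sin x :=
  aux_nonneg (f := fun x => x - Real.sin x) (f' := fun x => 1 - Real.cos x)
    (fun y => (hasDerivAt_id' (x := y)).sub (Real.hasDerivAt_sin y))
    (by simp) (fun y _ => by have := Real.cos_le_one y; show 0 ≤ 1 - Real.cos y; linarith) hx

private lemma chain2 {x : ℝ} (hx : 0 ≤ x) : 0 ≤ Real.cos x - 1 + x ^ 2 / 2 :=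
  aux_nonneg (f := fun x => Real.cos x - 1 + x ^ 2 / 2) (f' := fun x => x - Real.sin x)
    (fun y => by
      have h := ((Real.hasDerivAt_cos y).sub_const 1).add ((hasDerivAt_pow 2 y).div_const 2)
      refine h.congr_deriv ?_
      push_cast; ring)
    (by norm_num) (fun y hy => chain1 hy) hx

private lemma chain3 {x : ℝ} (hx : 0 ≤ x) : 0 ≤ Real.sin x - x + x ^ 3 / 6 :=
  aux_nonneg (f := fun x => Real.sin x - x + x ^ 3 / 6)
    (f' := fun x => Real.cos x - 1 + x ^ 2 / 2)
    (fun y => by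
      have h := ((Real.hasDerivAt_sin y).sub (hasDerivAt_id' (x := y))).add
        ((hasDerivAt_pow 3 y).div_const 6)
      refine h.congr_deriv ?_
      push_cast; ring)
    (by norm_num) (fun y hy => chain2 hy) hx

private lemma chain4 {x : ℝ} (hx : 0 ≤ x) : 0 ≤ 1 - x ^ 2 / 2 + x ^ 4 / 24 - Real.cos x :=
  aux_nonneg (f := fun x => 1 - x ^ 2 / 2 + x ^ 4 / 24 - Real.cos x)
    (f' := fun x => Real.sin x - x + x ^ 3 / 6)
    (fun y => by
      have h := (((hasDerivAt_const y (1:ℝ)).sub ((hasDerivAt_pow 2 y).div_const 2)).add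
        ((hasDerivAt_pow 4 y).div_const 24)).sub (Real.hasDerivAt_cos y)
      refine h.congr_deriv ?_
      push_cast; ring)
    (by norm_num) (fun y hy => chain3 hy) hx

private lemma chain5 {x : ℝ} (hx : 0 ≤ x) : 0 ≤ x - x ^ 3 / 6 + x ^ 5 / 120 - Real.sin x :=
  aux_nonneg (f := fun x => x - x ^ 3 / 6 + x ^ 5 / 120 - Real.sin x)
    (f' := fun x => 1 - x ^ 2 / 2 + x ^ 4 / 24 - Real.cos x)
    (fun y => by
      have h := (((hasDerivAt_id' (x := y)).sub ((hasDerivAt_pow 3 y).div_const 6)).add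
        ((hasDerivAt_pow 5 y).div_const 120)).sub (Real.hasDerivAt_sin y)
      refine h.congr_deriv ?_
      push_cast; ring)
    (by norm_num) (fun y hy => chain4 hy) hx

private lemma chain6 {x : ℝ} (hx : 0 ≤ x) :
    0 ≤ Real.cos x - 1 + x ^ 2 / 2 - x ^ 4 / 24 + x ^ 6 / 720 :=
  aux_nonneg (f := fun x => Real.cos x - 1 + x ^ 2 / 2 - x ^ 4 / 24 + x ^ 6 / 720)
    (f' := fun x => x - x ^ 3 / 6 + x ^ 5 / 120 - Real.sin x)
    (fun y => by
      have h := ((((Real.hasDerivAt_cos y).sub_const 1).add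
        ((hasDerivAt_pow 2 y).div_const 2)).sub ((hasDerivAt_pow 4 y).div_const 24)).add
        ((hasDerivAt_pow 6 y).div_const 720)
      refine h.congr_deriv ?_
      push_cast; ring)
    (by norm_num) (fun y hy => chain5 hy) hx

private lemma chain7 {x : ℝ} (hx : 0 ≤ x) :
    0 ≤ Real.sin x - x + x ^ 3 / 6 - x ^ 5 / 120 + x ^ 7 / 5040 :=
  aux_nonneg (f := fun x => Real.sin x - x + x ^ 3 / 6 - x ^ 5 / 120 + x ^ 7 / 5040)
    (f' := fun x => Real.cos x - 1 + x ^ 2 / 2 - x ^ 4 / 24 + x ^ 6 / 720)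
    (fun y => by
      have h := ((((Real.hasDerivAt_sin y).sub (hasDerivAt_id' (x := y))).add
        ((hasDerivAt_pow 3 y).div_const 6)).sub ((hasDerivAt_pow 5 y).div_const 120)).add
        ((hasDerivAt_pow 7 y).div_const 5040)
      refine h.congr_deriv ?_
      push_cast; ring)
    (by norm_num) (fun y hy => chain6 hy) hx

private lemma chain8 {x : ℝ} (hx : 0 ≤ x) :
    0 ≤ 1 - x ^ 2 / 2 + x ^ 4 / 24 - x ^ 6 / 720 + x ^ 8 / 40320 - Real.cos x :=
  aux_nonneg
    (f := fun x => 1 - x ^ 2 / 2 + x ^ 4 / 24 - x ^ 6 / 720 + x ^ 8 / 40320 - Real.cos x)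
    (f' := fun x => Real.sin x - x + x ^ 3 / 6 - x ^ 5 / 120 + x ^ 7 / 5040)
    (fun y => by
      have h := (((((hasDerivAt_const y (1:ℝ)).sub ((hasDerivAt_pow 2 y).div_const 2)).add
        ((hasDerivAt_pow 4 y).div_const 24)).sub ((hasDerivAt_pow 6 y).div_const 720)).add
        ((hasDerivAt_pow 8 y).div_const 40320)).sub (Real.hasDerivAt_cos y)
      refine h.congr_deriv ?_
      push_cast; ring)
    (by norm_num) (fun y hy => chain7 hy) hx

/-- Degree-9 Taylor upper bound for sin on `[0, ∞)`. -/
private lemma sin_le_poly9 {x : ℝ} (hx : 0 ≤ x) :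
    Real.sin x ≤ x - x ^ 3 / 6 + x ^ 5 / 120 - x ^ 7 / 5040 + x ^ 9 / 362880 := by
  have h := aux_nonneg
    (f := fun x => x - x ^ 3 / 6 + x ^ 5 / 120 - x ^ 7 / 5040 + x ^ 9 / 362880 - Real.sin x)
    (f' := fun x => 1 - x ^ 2 / 2 + x ^ 4 / 24 - x ^ 6 / 720 + x ^ 8 / 40320 - Real.cos x)
    (fun y => by
      have h := (((((hasDerivAt_id' (x := y)).sub ((hasDerivAt_pow 3 y).div_const 6)).add
        ((hasDerivAt_pow 5 y).div_const 120)).sub ((hasDerivAt_pow 7 y).div_const 5040)).add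
        ((hasDerivAt_pow 9 y).div_const 362880)).sub (Real.hasDerivAt_sin y)
      refine h.congr_deriv ?_
      push_cast; ring)
    (by norm_num) (fun y hy => chain8 hy) hx
  linarith



private lemma vol_slice (m : ℝ) :
    volume {y : ℝ | y ^ 2 ≤ m} = ENNReal.ofReal (2 * Real.sqrt m) := by
  rcases le_or_gt 0 m with hm | hm
  · have hset : {y : ℝ | y ^ 2 ≤ m} = Set.Icc (-Real.sqrt m) (Real.sqrt m) := by
      ext y
      simp only [Set.mem_setOf_eq, Set.mem_Icc, ← abs_le]
      constructor
      · exact fun h => Real.abs_le_sqrt h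
      · intro h
        have h2 := Real.sq_sqrt hm
        nlinarith [abs_nonneg y, sq_abs y]
    rw [hset, Real.volume_Icc]
    congr 1
    ring
  · have hset : {y : ℝ | y ^ 2 ≤ m} = ∅ := by
      ext y
      simp only [Set.mem_setOf_eq, Set.mem_empty_iff_false, iff_false, not_le]
      nlinarith [sq_nonneg y]
    rw [hset]
    rw [Real.sqrt_eq_zero'.2 hm.le]
    simp

private lemma lens_volume {R : ℝ} (hR1 : 1 ≤ R) (hR2 : R ≤ 1.2) :
    volume {p : ℝ × ℝ | (p.1 - 1) ^ 2 + p.2 ^ 2 ≤ 1 ∧ p.1 ^ 2 + p.2 ^ 2 ≤ R ^ 2} =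
    ENNReal.ofReal (-(Real.sqrt (R ^ 2 - R ^ 4 / 4)) + Real.arcsin (R ^ 2 / 2 - 1)
      + π * (1 + R ^ 2) / 2 - R ^ 2 * Real.arcsin (R / 2)) := by
  have hc0 : (0:ℝ) < R ^ 2 / 2 := by nlinarith
  have hcR : R ^ 2 / 2 ≤ R := by nlinarith
  have hc1 : R ^ 2 / 2 ≤ 1 := by nlinarith
  set g : ℝ → ℝ := fun x => 2 * Real.sqrt (min (1 - (x - 1) ^ 2) (R ^ 2 - x ^ 2)) with hg
  have hgcont : Continuous g := by
    apply continuous_const.mul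
    exact Real.continuous_sqrt.comp ((continuous_const.sub
      ((continuous_id.sub continuous_const).pow 2)).min
      (continuous_const.sub (continuous_id.pow 2)))
  have hgnn : ∀ x, 0 ≤ g x := fun x => by positivity
  have hgzero : ∀ x, x ∉ Set.Icc (0:ℝ) R → g x = 0 := by
    intro x hx
    simp only [Set.mem_Icc, not_and_or, not_le] at hx
    have : min (1 - (x - 1) ^ 2) (R ^ 2 - x ^ 2) ≤ 0 := by
      rcases hx with hx | hx
      · exact le_trans (min_le_left _ _) (by nlinarith)
      · exact le_trans (min_le_right _ _) (by nlinarith)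
    simp only [hg]
    rw [Real.sqrt_eq_zero'.2 this]
    ring
  -- step 1 : express volume as lintegral of slices
  have hmeas : MeasurableSet {p : ℝ × ℝ | (p.1 - 1) ^ 2 + p.2 ^ 2 ≤ 1 ∧ p.1 ^ 2 + p.2 ^ 2 ≤ R ^ 2} := by
    apply MeasurableSet.inter
    · exact (isClosed_le (((continuous_fst.sub continuous_const).pow 2).add
        (continuous_snd.pow 2)) continuous_const).measurableSet
    · exact (isClosed_le ((continuous_fst.pow 2).add (continuous_snd.pow 2))
        continuous_const).measurableSet
  have hvol : volume {p : ℝ × ℝ | (p.1 - 1) ^ 2 + p.2 ^ 2 ≤ 1 ∧ p.1 ^ 2 + p.2 ^ 2 ≤ R ^ 2}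
      = ∫⁻ x : ℝ, ENNReal.ofReal (g x) := by
    rw [MeasureTheory.Measure.volume_eq_prod ℝ ℝ, MeasureTheory.Measure.prod_apply hmeas]
    congr 1
    ext x
    have hsl : Prod.mk x ⁻¹' {p : ℝ × ℝ | (p.1 - 1) ^ 2 + p.2 ^ 2 ≤ 1 ∧ p.1 ^ 2 + p.2 ^ 2 ≤ R ^ 2}
        = {y : ℝ | y ^ 2 ≤ min (1 - (x - 1) ^ 2) (R ^ 2 - x ^ 2)} := by
      ext y
      simp only [Set.mem_preimage, Set.mem_setOf_eq, le_min_iff]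
      constructor
      · rintro ⟨h1, h2⟩; exact ⟨by linarith, by linarith⟩
      · rintro ⟨h1, h2⟩; exact ⟨by linarith, by linarith⟩
    rw [hsl, vol_slice]
  rw [hvol]
  -- step 2 : lintegral to integral
  have hint : Integrable g := by
    apply hgcont.integrable_of_hasCompactSupport
    exact HasCompactSupport.intro isCompact_Icc hgzero
  rw [← MeasureTheory.ofReal_integral_eq_lintegral_ofReal hint
    (Filter.Eventually.of_forall hgnn)]
  congr 1
  -- step 3 : reduce to interval integral
  have h3 : ∫ x : ℝ, g x = ∫ x in (0:ℝ)..R, g x := by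
    rw [← MeasureTheory.setIntegral_eq_integral_of_forall_compl_eq_zero hgzero,
      intervalIntegral.integral_of_le (by linarith : (0:ℝ) ≤ R),
      MeasureTheory.integral_Icc_eq_integral_Ioc]
  rw [h3]
  -- step 4 : split at c = R^2/2
  have hsplit : ∫ x in (0:ℝ)..R, g x
      = (∫ x in (0:ℝ)..(R^2/2), g x) + ∫ x in (R^2/2)..R, g x := by
    rw [intervalIntegral.integral_add_adjacent_intervals
      (hgcont.intervalIntegrable _ _) (hgcont.intervalIntegrable _ _)]
  rw [hsplit]
  -- piece 1
  have hp1 : ∫ x in (0:ℝ)..(R^2/2), g x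
      = ∫ x in (0:ℝ)..(R^2/2), 2 * Real.sqrt (1 - (x - 1) ^ 2) := by
    apply intervalIntegral.integral_congr
    intro x hx
    rw [Set.uIcc_of_le (by linarith : (0:ℝ) ≤ R^2/2)] at hx
    have h1 : 1 - (x - 1) ^ 2 ≤ R ^ 2 - x ^ 2 := by nlinarith [hx.1, hx.2]
    simp only [hg, min_eq_left h1]
  have hftc1 : ∫ x in (0:ℝ)..(R^2/2), 2 * Real.sqrt (1 - (x - 1) ^ 2)
      = (fun t : ℝ => (t - 1) * Real.sqrt (1 - (t - 1) ^ 2) + Real.arcsin (t - 1)) (R^2/2)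
        - (fun t : ℝ => (t - 1) * Real.sqrt (1 - (t - 1) ^ 2) + Real.arcsin (t - 1)) 0 := by
    apply intervalIntegral.integral_eq_sub_of_hasDerivAt_of_le
      (f := fun t : ℝ => (t - 1) * Real.sqrt (1 - (t - 1) ^ 2) + Real.arcsin (t - 1))
      (f' := fun x : ℝ => 2 * Real.sqrt (1 - (x - 1) ^ 2)) (by linarith)
    · apply Continuous.continuousOn
      apply Continuous.add
      · exact (continuous_id.sub continuous_const).mul
          (Real.continuous_sqrt.comp (continuous_const.sub
            ((continuous_id.sub continuous_const).pow 2)))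
      · exact Real.continuous_arcsin.comp (continuous_id.sub continuous_const)
    · intro x hx
      have hx0 := hx.1
      have hxc := hx.2
      have hpos : 0 < 1 - (x - 1) ^ 2 := by nlinarith
      have hs : Real.sqrt (1 - (x - 1) ^ 2) > 0 := Real.sqrt_pos.2 hpos
      have hsq : Real.sqrt (1 - (x - 1) ^ 2) ^ 2 = 1 - (x - 1) ^ 2 := Real.sq_sqrt hpos.le
      have h1 : HasDerivAt (fun x : ℝ => 1 - (x - 1) ^ 2) (-2 * (x - 1)) x := by
        have := (hasDerivAt_const x (1:ℝ)).sub (((hasDerivAt_id' (x := x)).sub_const 1).pow 2)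
        refine this.congr_deriv ?_
        push_cast; ring
      have hsqrt := h1.sqrt (by positivity)
      have hprod := ((hasDerivAt_id' (x := x)).sub_const 1).mul hsqrt
      have harc : HasDerivAt (fun x : ℝ => Real.arcsin (x - 1))
          ((1 / Real.sqrt (1 - (x - 1) ^ 2)) * 1) x := by
        exact (Real.hasDerivAt_arcsin (by nlinarith) (by nlinarith)).comp x
          ((hasDerivAt_id' (x := x)).sub_const 1)
      have htot := hprod.add harc
      refine htot.congr_deriv ?_
      field_simp
      nlinarith [hsq, hs]
    · exact ((continuous_const.mul (Real.continuous_sqrt.comp (continuous_const.sub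
        ((continuous_id.sub continuous_const).pow 2)))).intervalIntegrable _ _)
  -- piece 2
  have hp2 : ∫ x in (R^2/2)..R, g x
      = ∫ x in (R^2/2)..R, 2 * Real.sqrt (R ^ 2 - x ^ 2) := by
    apply intervalIntegral.integral_congr
    intro x hx
    rw [Set.uIcc_of_le hcR] at hx
    have h1 : R ^ 2 - x ^ 2 ≤ 1 - (x - 1) ^ 2 := by nlinarith [hx.1, hx.2]
    simp only [hg, min_eq_right h1]
  have hftc2 : ∫ x in (R^2/2)..R, 2 * Real.sqrt (R ^ 2 - x ^ 2)
      = (fun t : ℝ => t * Real.sqrt (R ^ 2 - t ^ 2) + R ^ 2 * Real.arcsin (t / R)) R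
        - (fun t : ℝ => t * Real.sqrt (R ^ 2 - t ^ 2) + R ^ 2 * Real.arcsin (t / R)) (R^2/2) := by
    apply intervalIntegral.integral_eq_sub_of_hasDerivAt_of_le
      (f := fun t : ℝ => t * Real.sqrt (R ^ 2 - t ^ 2) + R ^ 2 * Real.arcsin (t / R))
      (f' := fun x : ℝ => 2 * Real.sqrt (R ^ 2 - x ^ 2)) hcR
    · apply Continuous.continuousOn
      apply Continuous.add
      · exact continuous_id.mul (Real.continuous_sqrt.comp
          (continuous_const.sub (continuous_id.pow 2)))
      · exact continuous_const.mul
          (Real.continuous_arcsin.comp (continuous_id.div_const R))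
    · intro x hx
      have hx0 := hx.1
      have hxc := hx.2
      have hR0 : (0:ℝ) < R := by linarith
      have hpos : 0 < R ^ 2 - x ^ 2 := by nlinarith
      have hs : Real.sqrt (R ^ 2 - x ^ 2) > 0 := Real.sqrt_pos.2 hpos
      have hsq : Real.sqrt (R ^ 2 - x ^ 2) ^ 2 = R ^ 2 - x ^ 2 := Real.sq_sqrt hpos.le
      have h1 : HasDerivAt (fun x : ℝ => R ^ 2 - x ^ 2) (-2 * x) x := by
        have := (hasDerivAt_const x (R^2)).sub ((hasDerivAt_id' (x := x)).pow 2)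
        refine this.congr_deriv ?_
        push_cast; ring
      have hsqrt := h1.sqrt (by positivity)
      have hprod := (hasDerivAt_id' (x := x)).mul hsqrt
      have hdivsqrt : Real.sqrt (1 - (x / R) ^ 2) = Real.sqrt (R ^ 2 - x ^ 2) / R := by
        rw [show 1 - (x / R) ^ 2 = (R ^ 2 - x ^ 2) / R ^ 2 by field_simp,
          Real.sqrt_div hpos.le, Real.sqrt_sq hR0.le]
      have harc : HasDerivAt (fun x : ℝ => R ^ 2 * Real.arcsin (x / R))
          (R ^ 2 * ((1 / (Real.sqrt (R ^ 2 - x ^ 2) / R)) * (1 / R))) x := by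
        apply HasDerivAt.const_mul
        have := (Real.hasDerivAt_arcsin
          (by rw [ne_eq, div_eq_iff (by positivity)]; nlinarith)
          (by rw [ne_eq, div_eq_iff (by positivity)]; nlinarith)).comp x
          ((hasDerivAt_id' (x := x)).div_const R)
        rw [hdivsqrt] at this
        exact this
      have htot := hprod.add harc
      refine htot.congr_deriv ?_
      field_simp
      linear_combination (-1) * hsq
    · exact ((continuous_const.mul (Real.continuous_sqrt.comp
        (continuous_const.sub (continuous_id.pow 2)))).intervalIntegrable _ _)
  rw [hp1, hftc1, hp2, hftc2]
  simp only
  have hrad1 : (1 : ℝ) - (R^2/2 - 1) ^ 2 = R ^ 2 - R ^ 4 / 4 := by ring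
  have hrad2 : R ^ 2 - (R^2/2) ^ 2 = R ^ 2 - R ^ 4 / 4 := by ring
  have hRR : R / R = 1 := div_self (by positivity)
  have hcRR : R ^ 2 / 2 / R = R / 2 := by field_simp
  rw [hrad1, hrad2, hRR, hcRR, Real.arcsin_one, show (0:ℝ) - 1 = -1 by ring,
    Real.arcsin_neg_one, show (1:ℝ) - (-1:ℝ) ^ 2 = 0 by ring, Real.sqrt_zero,
    show R ^ 2 - R ^ 2 = 0 by ring, Real.sqrt_zero]
  ring

private lemma arcsin_lb {t θ : ℝ} (h0 : 0 ≤ θ) (h2 : θ ≤ π / 2) (h : Real.sin θ ≤ t) :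
    θ ≤ Real.arcsin t := by
  have hpi := Real.pi_pos
  exact (Real.le_arcsin_iff_sin_le' ⟨by linarith, h2⟩).2 h

private lemma arcsin_num1 : (0.43384041 : ℝ) ≤ Real.arcsin 0.420358555 := by
  have hpi := Real.pi_gt_d6
  apply arcsin_lb (by norm_num) (by linarith)
  calc Real.sin 0.43384041 ≤ _ := sin_le_poly9 (by norm_num)
    _ ≤ (0.420358555 : ℝ) := by norm_num

private lemma arcsin_num2 : (0.5684779 : ℝ) ≤ Real.arcsin 0.53835 := by
  have hpi := Real.pi_gt_d6
  apply arcsin_lb (by norm_num) (by linarith)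
  calc Real.sin 0.5684779 ≤ _ := sin_le_poly9 (by norm_num)
    _ ≤ (0.53835 : ℝ) := by norm_num

private lemma arcsin_half : Real.arcsin (1 / 2) = π / 6 := by
  have hpi := Real.pi_pos
  rw [← Real.sin_pi_div_six]
  exact Real.arcsin_sin (by linarith) (by linarith)

private lemma key_real_ineq :
    (-(Real.sqrt ((1.0767:ℝ) ^ 2 - 1.0767 ^ 4 / 4)) + Real.arcsin ((1.0767:ℝ) ^ 2 / 2 - 1)
      + π * (1 + (1.0767:ℝ) ^ 2) / 2 - (1.0767:ℝ) ^ 2 * Real.arcsin (1.0767 / 2))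
    ≤ 0.1632 + (-(Real.sqrt ((1:ℝ) ^ 2 - 1 ^ 4 / 4)) + Real.arcsin ((1:ℝ) ^ 2 / 2 - 1)
      + π * (1 + (1:ℝ) ^ 2) / 2 - (1:ℝ) ^ 2 * Real.arcsin (1 / 2)) := by
  have h1 : Real.arcsin ((1.0767:ℝ) ^ 2 / 2 - 1) = -Real.arcsin 0.420358555 := by
    rw [show ((1.0767:ℝ) ^ 2 / 2 - 1) = -0.420358555 by norm_num, Real.arcsin_neg]
  have h2 : Real.arcsin ((1:ℝ) ^ 2 / 2 - 1) = -(π / 6) := by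
    rw [show ((1:ℝ) ^ 2 / 2 - 1) = -(1/2) by norm_num, Real.arcsin_neg, arcsin_half]
  have h3 : (1.0767:ℝ) / 2 = 0.53835 := by norm_num
  have h4 : (0.90735735 : ℝ) ≤ Real.sqrt ((1.0767:ℝ) ^ 2 - 1.0767 ^ 4 / 4) := by
    rw [Real.le_sqrt (by norm_num) (by norm_num)]
    norm_num
  have h5 : Real.sqrt ((1:ℝ) ^ 2 - 1 ^ 4 / 4) ≤ 0.86602541 := by
    rw [Real.sqrt_le_iff]
    norm_num
  have h6 := arcsin_num1
  have h7 := arcsin_num2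
  have hpiu := Real.pi_lt_d6
  have hpil := Real.pi_gt_d6
  rw [h1, h2, h3, arcsin_half]
  nlinarith [h4, h5, h6, h7, hpiu, hpil]

/-- With ‖ab‖ = ρ > 0, the area of B(1.0767ρ) = (D(b,ρ) \ D(a,ρ)) ∩ D(a,1.0767ρ)
is at most 0.1632ρ². -/
theorem lune_cap_area_bound (a b : EuclideanSpace ℝ (Fin 2)) (ρ : ℝ)
    (hρ : 0 < ρ) (hab : dist a b = ρ) :
    volume ((Metric.closedBall b ρ \ Metric.closedBall a ρ) ∩
        Metric.closedBall a (1.0767 * ρ)) ≤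
      ENNReal.ofReal (0.1632 * ρ ^ 2) := by
  classical
  have hρ' : (ρ:ℝ) ≠ 0 := ne_of_gt hρ
  -- the unit vector in the direction of b - a
  set u : EuclideanSpace ℝ (Fin 2) := ρ⁻¹ • (b - a) with hu
  have hnu : ‖u‖ = 1 := by
    rw [hu, norm_smul, norm_inv, Real.norm_eq_abs, abs_of_pos hρ,
      show ‖b - a‖ = dist b a from (dist_eq_norm b a).symm, dist_comm b a, hab]
    field_simp
  set e₀ : EuclideanSpace ℝ (Fin 2) := EuclideanSpace.single 0 1 with he₀
  have hne : ‖e₀‖ = 1 := by rw [he₀, EuclideanSpace.norm_single]; norm_num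
  -- reflection sending u to e₀
  set T := Submodule.reflection (𝕜 := ℝ) (ℝ ∙ (u - e₀))ᗮ with hT
  have hTu : T u = e₀ := Submodule.reflection_sub (by rw [hnu, hne])
  -- target sets
  set S₂ : Set (ℝ × ℝ) := {p : ℝ × ℝ | (p.1 - 1) ^ 2 + p.2 ^ 2 ≤ 1 ∧
    ¬ (p.1 ^ 2 + p.2 ^ 2 ≤ 1) ∧ p.1 ^ 2 + p.2 ^ 2 ≤ 1.0767 ^ 2} with hS₂
  set S₁ : Set (EuclideanSpace ℝ (Fin 2)) := (Metric.closedBall e₀ 1 \ Metric.closedBall 0 1) ∩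
    Metric.closedBall 0 1.0767 with hS₁
  have hS₁meas : MeasurableSet S₁ :=
    ((isClosed_closedBall.measurableSet.diff isClosed_closedBall.measurableSet).inter
      isClosed_closedBall.measurableSet)
  -- key distance identities
  have key1 : ∀ x : EuclideanSpace ℝ (Fin 2),
      dist (T (ρ⁻¹ • (x - a))) e₀ = ρ⁻¹ * dist x b := by
    intro x
    rw [← hTu, T.dist_map, hu, dist_smul₀, dist_sub_right, norm_inv, Real.norm_eq_abs,
      abs_of_pos hρ, dist_comm x b]
  have key2 : ∀ x : EuclideanSpace ℝ (Fin 2),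
      dist (T (ρ⁻¹ • (x - a))) 0 = ρ⁻¹ * dist x a := by
    intro x
    rw [dist_zero_right, T.norm_map, norm_smul, norm_inv, Real.norm_eq_abs, abs_of_pos hρ,
      show ‖x - a‖ = dist x a from (dist_eq_norm x a).symm]
  -- the original set as a preimage of S₁
  have hpre : (Metric.closedBall b ρ \ Metric.closedBall a ρ) ∩
      Metric.closedBall a (1.0767 * ρ) =
      (fun x : EuclideanSpace ℝ (Fin 2) => x - a) ⁻¹'
        ((fun y : EuclideanSpace ℝ (Fin 2) => ρ⁻¹ • y) ⁻¹'
          ((T : EuclideanSpace ℝ (Fin 2) → EuclideanSpace ℝ (Fin 2)) ⁻¹' S₁)) := by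
    ext x
    simp only [Set.mem_inter_iff, Set.mem_diff, Set.mem_preimage, Metric.mem_closedBall, hS₁]
    have k1 := key1 x
    have k2 := key2 x
    have hinv : 0 < ρ⁻¹ := inv_pos.2 hρ
    constructor
    · rintro ⟨⟨hb1, hb2⟩, hb3⟩
      refine ⟨⟨?_, fun hcon => hb2 ?_⟩, ?_⟩
      · rw [k1]; rw [inv_mul_le_iff₀ hρ]; linarith
      · rw [k2, inv_mul_le_iff₀ hρ] at hcon; linarith
      · rw [k2, inv_mul_le_iff₀ hρ]; linarith
    · rintro ⟨⟨hb1, hb2⟩, hb3⟩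
      rw [k1, inv_mul_le_iff₀ hρ] at hb1
      rw [k2, inv_mul_le_iff₀ hρ] at hb3
      refine ⟨⟨by linarith, fun hcon => hb2 ?_⟩, by linarith⟩
      rw [k2, inv_mul_le_iff₀ hρ]
      linarith
  -- measurability of intermediate sets
  have hTmeas : MeasurableSet ((T : EuclideanSpace ℝ (Fin 2) → EuclideanSpace ℝ (Fin 2)) ⁻¹' S₁) :=
    hS₁meas.preimage T.continuous.measurable
  -- translation invariance
  rw [hpre, show (fun x : EuclideanSpace ℝ (Fin 2) => x - a)
      = (fun x : EuclideanSpace ℝ (Fin 2) => x + (-a)) by funext x; rw [sub_eq_add_neg],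
    measure_preimage_add_right]
  -- scaling
  rw [Set.preimage_smul₀ (inv_ne_zero hρ'), inv_inv, Measure.addHaar_smul,
    finrank_euclideanSpace_fin, abs_of_nonneg (by positivity : (0:ℝ) ≤ ρ ^ 2)]
  -- rotation invariance
  rw [(T.measurePreserving).measure_preimage hS₁meas.nullMeasurableSet]
  -- coordinates
  have hS₂meas : MeasurableSet S₂ := by
    rw [hS₂]
    apply MeasurableSet.inter
    · exact (isClosed_le (((continuous_fst.sub continuous_const).pow 2).add
        (continuous_snd.pow 2)) continuous_const).measurableSet
    · apply MeasurableSet.inter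
      · exact ((isClosed_le ((continuous_fst.pow 2).add (continuous_snd.pow 2))
          continuous_const).measurableSet).compl
      · exact (isClosed_le ((continuous_fst.pow 2).add (continuous_snd.pow 2))
          continuous_const).measurableSet
  have hball : ∀ (x y : EuclideanSpace ℝ (Fin 2)) (r : ℝ), 0 ≤ r →
      (dist x y ≤ r ↔ (x 0 - y 0) ^ 2 + (x 1 - y 1) ^ 2 ≤ r ^ 2) := by
    intro x y r hr
    rw [EuclideanSpace.dist_eq, Real.sqrt_le_left hr]
    simp [Fin.sum_univ_two, Real.dist_eq, sq_abs]
  have hcoord : S₁ = (MeasurableEquiv.toLp 2 (Fin 2 → ℝ)).symm ⁻¹'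
      ((MeasurableEquiv.finTwoArrow) ⁻¹' S₂) := by
    ext x
    have h1 := hball x e₀ 1 (by norm_num)
    have h2 := hball x 0 1 (by norm_num)
    have h3 := hball x 0 1.0767 (by norm_num)
    have he0 : e₀ 0 = 1 := by rw [he₀]; simp [EuclideanSpace.single_apply]
    have he1 : e₀ 1 = 0 := by rw [he₀]; simp [EuclideanSpace.single_apply]
    have hz : ∀ i : Fin 2, (0 : EuclideanSpace ℝ (Fin 2)) i = 0 := fun _ => rfl
    simp only [hS₁, hS₂, Set.mem_inter_iff, Set.mem_diff, Set.mem_preimage,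
      Metric.mem_closedBall, Set.mem_setOf_eq, MeasurableEquiv.finTwoArrow,
      MeasurableEquiv.coe_mk, Equiv.coe_fn_mk]
    rw [h1, h2, h3, he0, he1, hz 0, hz 1]
    simp only [MeasurableEquiv.coe_toLp_symm, one_pow, not_le, sub_zero]
    tauto
  rw [hcoord,
    (EuclideanSpace.volume_preserving_symm_measurableEquiv_toLp (Fin 2)).measure_preimage
      (hS₂meas.preimage MeasurableEquiv.finTwoArrow.measurable).nullMeasurableSet,
    (volume_preserving_finTwoArrow ℝ).measure_preimage hS₂meas.nullMeasurableSet]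
  -- lens difference
  have hvLb := lens_volume (R := 1.0767) (by norm_num) (by norm_num)
  have hvLs := lens_volume (R := 1) (by norm_num) (by norm_num)
  have hsub : {p : ℝ × ℝ | (p.1 - 1) ^ 2 + p.2 ^ 2 ≤ 1 ∧ p.1 ^ 2 + p.2 ^ 2 ≤ (1:ℝ) ^ 2}
      ⊆ {p : ℝ × ℝ | (p.1 - 1) ^ 2 + p.2 ^ 2 ≤ 1 ∧ p.1 ^ 2 + p.2 ^ 2 ≤ (1.0767:ℝ) ^ 2} := by
    rintro p ⟨h1, h2⟩
    exact ⟨h1, by nlinarith⟩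
  have hsmeas : MeasurableSet
      {p : ℝ × ℝ | (p.1 - 1) ^ 2 + p.2 ^ 2 ≤ 1 ∧ p.1 ^ 2 + p.2 ^ 2 ≤ (1:ℝ) ^ 2} := by
    apply MeasurableSet.inter
    · exact (isClosed_le (((continuous_fst.sub continuous_const).pow 2).add
        (continuous_snd.pow 2)) continuous_const).measurableSet
    · exact (isClosed_le ((continuous_fst.pow 2).add (continuous_snd.pow 2))
        continuous_const).measurableSet
  have hdiff : S₂ = {p : ℝ × ℝ | (p.1 - 1) ^ 2 + p.2 ^ 2 ≤ 1 ∧ p.1 ^ 2 + p.2 ^ 2 ≤ (1.0767:ℝ) ^ 2}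
      \ {p : ℝ × ℝ | (p.1 - 1) ^ 2 + p.2 ^ 2 ≤ 1 ∧ p.1 ^ 2 + p.2 ^ 2 ≤ (1:ℝ) ^ 2} := by
    ext p
    simp only [hS₂, Set.mem_setOf_eq, Set.mem_diff, one_pow]
    tauto
  rw [hdiff, measure_diff hsub hsmeas.nullMeasurableSet (by rw [hvLs]; exact ENNReal.ofReal_ne_top),
    hvLb, hvLs]
  -- final numeric bound
  calc ENNReal.ofReal (ρ ^ 2) *
      (ENNReal.ofReal (-(Real.sqrt ((1.0767:ℝ) ^ 2 - 1.0767 ^ 4 / 4))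
          + Real.arcsin ((1.0767:ℝ) ^ 2 / 2 - 1)
          + π * (1 + (1.0767:ℝ) ^ 2) / 2 - (1.0767:ℝ) ^ 2 * Real.arcsin (1.0767 / 2))
        - ENNReal.ofReal (-(Real.sqrt ((1:ℝ) ^ 2 - 1 ^ 4 / 4)) + Real.arcsin ((1:ℝ) ^ 2 / 2 - 1)
          + π * (1 + (1:ℝ) ^ 2) / 2 - (1:ℝ) ^ 2 * Real.arcsin (1 / 2)))
      ≤ ENNReal.ofReal (ρ ^ 2) * ENNReal.ofReal 0.1632 := by
        apply mul_le_mul_right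
        rw [tsub_le_iff_right]
        calc ENNReal.ofReal (-(Real.sqrt ((1.0767:ℝ) ^ 2 - 1.0767 ^ 4 / 4))
              + Real.arcsin ((1.0767:ℝ) ^ 2 / 2 - 1)
              + π * (1 + (1.0767:ℝ) ^ 2) / 2 - (1.0767:ℝ) ^ 2 * Real.arcsin (1.0767 / 2))
            ≤ ENNReal.ofReal (0.1632 + (-(Real.sqrt ((1:ℝ) ^ 2 - 1 ^ 4 / 4))
              + Real.arcsin ((1:ℝ) ^ 2 / 2 - 1)
              + π * (1 + (1:ℝ) ^ 2) / 2 - (1:ℝ) ^ 2 * Real.arcsin (1 / 2))) :=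
              ENNReal.ofReal_le_ofReal key_real_ineq
          _ ≤ _ := ENNReal.ofReal_add_le
    _ = ENNReal.ofReal (0.1632 * ρ ^ 2) := by
        rw [← ENNReal.ofReal_mul (by positivity), mul_comm]
end
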